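/- arXiv:1903.04372 — 4 statements merged into one kernel-verified Lean document; each statement's English description precedes it below -/
import Mathlib

section
/- For every s > 0 there exist constants ε₁ > 0 and L ∈ ℝ such that for every ε ∈ (0, ε₁) and every monotone traveling wave profile (N, 𝒫) for the parameters s and ε (with N and 𝒫 additionally assumed three times differentiable so that second derivatives are defined), the following bounds hold for all z ∈ ℝ: |N(z)| ≤ L, |N'(z)| ≤ L, |N''(z)| ≤ L, |𝒫(z)| ≤ L, |𝒫'(z)| ≤ L, |𝒫''(z)| ≤ L; moreover |(1/N)'(z)| + |(1/N)''(z)| ≤ L / N(z) and |(1/√N)'(z)| ≤ L / √(N(z)). -/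
open MeasureTheory Filter Topology

noncomputable section

namespace KSWave

/-- Partial derivative in the first variable of a function of two real variables. -/
def dz2 (f : ℝ → ℝ → ℝ) : ℝ → ℝ → ℝ := fun z y => deriv (fun u => f u y) z

/-- Partial derivative in the second variable of a function of two real variables. -/
def dy2 (f : ℝ → ℝ → ℝ) : ℝ → ℝ → ℝ := fun z y => deriv (fun v => f z v) y

/-- Mixed partial derivative `∂_z^i ∂_y^j f`. -/
def pd (i j : ℕ) (f : ℝ → ℝ → ℝ) : ℝ → ℝ → ℝ := dz2^[i] (dy2^[j] f)

/-- Integral over the strip `Ω = ℝ × [0, lam]`. -/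
def intOmega (lam : ℝ) (g : ℝ → ℝ → ℝ) : ℝ := ∫ z : ℝ, ∫ y in (0:ℝ)..lam, g z y

/-- Squared `L²(Ω)` norm with weight `w(z)`. -/
def sqNormW (lam : ℝ) (w : ℝ → ℝ) (f : ℝ → ℝ → ℝ) : ℝ :=
  intOmega lam fun z y => (f z y) ^ 2 * w z

/-- Squared weighted Sobolev `H^k(Ω)` norm: `Σ_{i+j≤k} ∫_Ω |∂_z^i ∂_y^j f|² w(z)`. -/
def sobNormW (lam : ℝ) (w : ℝ → ℝ) (k : ℕ) (f : ℝ → ℝ → ℝ) : ℝ :=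
  ∑ i ∈ Finset.range (k + 1), ∑ j ∈ Finset.range (k + 1 - i), sqNormW lam w (pd i j f)

/-- Squared weighted `L²` norm of the `l`-th order gradient: `Σ_{i+j=l} ∫_Ω |∂_z^i ∂_y^j f|² w(z)`. -/
def gradNormW (lam : ℝ) (w : ℝ → ℝ) (l : ℕ) (f : ℝ → ℝ → ℝ) : ℝ :=
  ∑ i ∈ Finset.range (l + 1), sqNormW lam w (pd i (l - i) f)

/-- Squared weighted `H^k` norm of the gradient `∇f = (∂_z f, ∂_y f)`. -/
def gradSobW (lam : ℝ) (w : ℝ → ℝ) (k : ℕ) (f : ℝ → ℝ → ℝ) : ℝ :=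
  sobNormW lam w k (pd 1 0 f) + sobNormW lam w k (pd 0 1 f)

/-- Partial derivative in the first variable (z or x). -/
def DZ (f : ℝ → ℝ → ℝ → ℝ) : ℝ → ℝ → ℝ → ℝ := fun z y t => deriv (fun u => f u y t) z

/-- Partial derivative in the second variable (y). -/
def DY (f : ℝ → ℝ → ℝ → ℝ) : ℝ → ℝ → ℝ → ℝ := fun z y t => deriv (fun v => f z v t) y

/-- Partial derivative in the third variable (time). -/
def DT (f : ℝ → ℝ → ℝ → ℝ) : ℝ → ℝ → ℝ → ℝ := fun z y t => deriv (fun τ => f z y τ) t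

/-- Spatial Laplacian in the first two variables. -/
def LAP (f : ℝ → ℝ → ℝ → ℝ) : ℝ → ℝ → ℝ → ℝ :=
  fun z y t => DZ (DZ f) z y t + DY (DY f) z y t

/-- Time slice of a time-dependent function. -/
def slice (f : ℝ → ℝ → ℝ → ℝ) (t : ℝ) : ℝ → ℝ → ℝ := fun z y => f z y t

/-- Divergence of the vector field `(φ1, φ2)` in the spatial variables. -/
def divphi (φ1 φ2 : ℝ → ℝ → ℝ → ℝ) : ℝ → ℝ → ℝ → ℝ :=
  fun z y t => DZ φ1 z y t + DY φ2 z y t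

/-- A traveling wave profile `(N, 𝒫)` for the parameters `s`, `ε`:
a pair of `C²` functions solving `-s N' - N'' = (𝒫 N)'`, `-s 𝒫' - ε 𝒫'' = (N - ε 𝒫²)'`
with the front boundary conditions. -/
structure IsProfile (s ε : ℝ) (N P : ℝ → ℝ) : Prop where
  contDiff_N : ContDiff ℝ 2 N
  contDiff_P : ContDiff ℝ 2 P
  ode_N : ∀ z : ℝ, -s * deriv N z - deriv (deriv N) z = deriv (fun u => P u * N u) z
  ode_P : ∀ z : ℝ, -s * deriv P z - ε * deriv (deriv P) z
      = deriv (fun u => N u - ε * (P u) ^ 2) z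
  N_atBot : Tendsto N atBot (nhds ((1 + ε) * s ^ 2))
  N_atTop : Tendsto N atTop (nhds 0)
  P_atBot : Tendsto P atBot (nhds (-s))
  P_atTop : Tendsto P atTop (nhds 0)
  dN_atBot : Tendsto (deriv N) atBot (nhds 0)
  dN_atTop : Tendsto (deriv N) atTop (nhds 0)
  dP_atBot : Tendsto (deriv P) atBot (nhds 0)
  dP_atTop : Tendsto (deriv P) atTop (nhds 0)

/-- A monotone traveling wave profile. -/
structure IsMonotoneProfile (s ε : ℝ) (N P : ℝ → ℝ) extends IsProfile s ε N P : Prop where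
  N_pos : ∀ z : ℝ, 0 < N z
  N_lt : ∀ z : ℝ, N z < (1 + ε) * s ^ 2
  dN_neg : ∀ z : ℝ, deriv N z < 0
  P_gt : ∀ z : ℝ, -s < P z
  P_neg : ∀ z : ℝ, P z < 0
  dP_pos : ∀ z : ℝ, 0 < deriv P z

/-- `(φ1, φ2, ψ)` is a smooth, `lam`-periodic-in-`y` solution of the perturbation system
`∂ₜφ - s ∂_z φ - Δφ = N ∇ψ + (𝒫 ∇·φ, 0) + (∇·φ) ∇ψ`,
`∂ₜψ - s ∂_z ψ - ε Δψ = -2ε P·∇ψ - ε |∇ψ|² + ∇·φ`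
for times `t ∈ S`. -/
structure IsPerturbationSolution (s ε lam : ℝ) (N P : ℝ → ℝ)
    (φ1 φ2 ψ : ℝ → ℝ → ℝ → ℝ) (S : Set ℝ) : Prop where
  smooth_φ1 : ContDiff ℝ (⊤ : ℕ∞) fun q : ℝ × ℝ × ℝ => φ1 q.1 q.2.1 q.2.2
  smooth_φ2 : ContDiff ℝ (⊤ : ℕ∞) fun q : ℝ × ℝ × ℝ => φ2 q.1 q.2.1 q.2.2
  smooth_ψ : ContDiff ℝ (⊤ : ℕ∞) fun q : ℝ × ℝ × ℝ => ψ q.1 q.2.1 q.2.2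
  periodic_φ1 : ∀ z y t : ℝ, φ1 z (y + lam) t = φ1 z y t
  periodic_φ2 : ∀ z y t : ℝ, φ2 z (y + lam) t = φ2 z y t
  periodic_ψ : ∀ z y t : ℝ, ψ z (y + lam) t = ψ z y t
  eq_φ1 : ∀ z y : ℝ, ∀ t ∈ S,
    DT φ1 z y t - s * DZ φ1 z y t - LAP φ1 z y t
      = N z * DZ ψ z y t + P z * divphi φ1 φ2 z y t + divphi φ1 φ2 z y t * DZ ψ z y t
  eq_φ2 : ∀ z y : ℝ, ∀ t ∈ S,
    DT φ2 z y t - s * DZ φ2 z y t - LAP φ2 z y t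
      = N z * DY ψ z y t + divphi φ1 φ2 z y t * DY ψ z y t
  eq_ψ : ∀ z y : ℝ, ∀ t ∈ S,
    DT ψ z y t - s * DZ ψ z y t - ε * LAP ψ z y t
      = -(2 * ε) * (P z * DZ ψ z y t) - ε * ((DZ ψ z y t) ^ 2 + (DY ψ z y t) ^ 2)
        + divphi φ1 φ2 z y t

/-- The quantity `‖φ(t)‖²_{H³_w} + ‖ψ(t)‖²_{H³} + ‖∇ψ(t)‖²_{H²_w}`. -/
def energy (lam : ℝ) (w : ℝ → ℝ) (φ1 φ2 ψ : ℝ → ℝ → ℝ → ℝ) (t : ℝ) : ℝ :=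
  sobNormW lam w 3 (slice φ1 t) + sobNormW lam w 3 (slice φ2 t)
    + sobNormW lam (fun _ => 1) 3 (slice ψ t) + gradSobW lam w 2 (slice ψ t)

/-- `M(t) = sup_{σ ∈ [0,t]} ( ‖φ(σ)‖²_{H³_w} + ‖ψ(σ)‖²_{H³} + ‖∇ψ(σ)‖²_{H²_w} )`. -/
def MM (lam : ℝ) (w : ℝ → ℝ) (φ1 φ2 ψ : ℝ → ℝ → ℝ → ℝ) (t : ℝ) : ℝ :=
  sSup (energy lam w φ1 φ2 ψ '' Set.Icc 0 t)

/-- `(n, p1, p2)` satisfies, at the point `(x,y,t)`, the transformed Keller-Segel system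
`∂ₜn - Δn = ∇·(n p)`, `∂ₜp - ε Δp = -2ε (p·∇)p + ∇n`. -/
def IsNPSolutionAt (ε : ℝ) (n p1 p2 : ℝ → ℝ → ℝ → ℝ) (x y t : ℝ) : Prop :=
  (DT n x y t - LAP n x y t
      = DZ (fun a b c => n a b c * p1 a b c) x y t
        + DY (fun a b c => n a b c * p2 a b c) x y t)
  ∧ (DT p1 x y t - ε * LAP p1 x y t
      = -(2 * ε) * (p1 x y t * DZ p1 x y t + p2 x y t * DY p1 x y t) + DZ n x y t)
  ∧ (DT p2 x y t - ε * LAP p2 x y t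
      = -(2 * ε) * (p1 x y t * DZ p2 x y t + p2 x y t * DY p2 x y t) + DY n x y t)

end KSWave

/-!
Both profile equations are exact derivatives; integrating them from `+∞` gives the first
integrals `N' = -(s + 𝒫) N` and `ε 𝒫' = ε 𝒫² - s 𝒫 - N`. Together with `0 < N < (1 + ε) s²`
and `-s < 𝒫 < 0` these bound `N`, `N'`, `𝒫`, and they express `N''`, `(1/N)'`, `(1/N)''`,
`(1/√N)'` through `𝒫` and `𝒫'`, so everything reduces to bounds on `𝒫'` and `𝒫''`. Both tend
to `0` at `±∞`, hence are controlled by their values at critical points. There the first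
integral for `𝒫`, differentiated once resp. twice, has the factor `s - 2ε𝒫 ≥ s` in front of
the unknown, which gives `𝒫' ≤ (1 + ε) s²` and `|𝒫''| ≤ (1 + 2ε)(1 + ε)² s³`, uniformly
for `ε ≤ 1`.
-/

namespace KSWave

theorem le_of_forall_deriv_eq_zero_le {f : ℝ → ℝ} {M : ℝ} (hf : Continuous f)
    (hbot : Tendsto f atBot (𝓝 0)) (htop : Tendsto f atTop (𝓝 0)) (hM : 0 ≤ M)
    (hcrit : ∀ c, deriv f c = 0 → f c ≤ M) (z : ℝ) : f z ≤ M := by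
  by_contra! hz
  have hev : ∀ᶠ x in cocompact ℝ, f x ≤ f z := by
    rw [cocompact_eq_atBot_atTop]
    exact (hbot.sup htop).eventually (ge_mem_nhds (hM.trans_lt hz))
  obtain ⟨c, hc⟩ := hf.exists_forall_ge' z hev
  have hmax : IsLocalMax f c := Eventually.of_forall hc
  linarith [hc z, hcrit c hmax.deriv_eq_zero]

theorem abs_le_of_forall_deriv_eq_zero_abs_le {f : ℝ → ℝ} {M : ℝ} (hf : Continuous f)
    (hbot : Tendsto f atBot (𝓝 0)) (htop : Tendsto f atTop (𝓝 0)) (hM : 0 ≤ M)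
    (hcrit : ∀ c, deriv f c = 0 → |f c| ≤ M) (z : ℝ) : |f z| ≤ M := by
  have hupper := le_of_forall_deriv_eq_zero_le hf hbot htop hM
    (fun c hc => (le_abs_self _).trans (hcrit c hc)) z
  have hlower := le_of_forall_deriv_eq_zero_le (f := fun x => -f x) hf.neg
    (by simpa using hbot.neg) (by simpa using htop.neg) hM
    (fun c hc => (neg_le_abs _).trans (hcrit c (by simpa [deriv.neg] using hc))) z
  exact abs_le.2 ⟨by linarith, hupper⟩

theorem eq_zero_of_deriv_eq_zero_of_tendsto_atTop {f : ℝ → ℝ} (hf : Differentiable ℝ f)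
    (hf' : ∀ x, deriv f x = 0) (hlim : Tendsto f atTop (𝓝 0)) (x : ℝ) : f x = 0 := by
  have hconst : f = fun _ => f x := funext fun y => is_const_of_deriv_eq_zero hf hf' y x
  rw [hconst] at hlim
  exact tendsto_const_nhds_iff.mp hlim

variable {s ε : ℝ} {N P : ℝ → ℝ}

namespace IsProfile

theorem differentiable_N (h : IsProfile s ε N P) : Differentiable ℝ N :=
  h.contDiff_N.differentiable (by norm_num)

theorem differentiable_P (h : IsProfile s ε N P) : Differentiable ℝ P :=
  h.contDiff_P.differentiable (by norm_num)

theorem differentiable_deriv_N (h : IsProfile s ε N P) : Differentiable ℝ (deriv N) :=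
  h.contDiff_N.differentiable_deriv_two

theorem differentiable_deriv_P (h : IsProfile s ε N P) : Differentiable ℝ (deriv P) :=
  h.contDiff_P.differentiable_deriv_two

theorem deriv_N_eq (h : IsProfile s ε N P) (z : ℝ) : deriv N z = -(s + P z) * N z := by
  have hN := h.differentiable_N
  have hN' := h.differentiable_deriv_N
  have hP := h.differentiable_P
  have hzero := eq_zero_of_deriv_eq_zero_of_tendsto_atTop
    (f := fun x => s * N x + deriv N x + P x * N x) (by fun_prop) (fun x => ?_) ?_ z
  · linear_combination hzero
  · have hD : HasDerivAt (fun x => s * N x + deriv N x + P x * N x)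
        (s * deriv N x + deriv (deriv N) x + deriv (fun u => P u * N u) x) x :=
      (((hN x).hasDerivAt.const_mul s).add (hN' x).hasDerivAt).add ((hP x).mul (hN x)).hasDerivAt
    rw [hD.deriv]
    linarith [h.ode_N x]
  · simpa using ((h.N_atTop.const_mul s).add h.dN_atTop).add (h.P_atTop.mul h.N_atTop)

theorem eps_mul_deriv_P_eq (h : IsProfile s ε N P) (z : ℝ) :
    ε * deriv P z = ε * P z ^ 2 - s * P z - N z := by
  have hN := h.differentiable_N
  have hP := h.differentiable_P
  have hP' := h.differentiable_deriv_P
  have hzero := eq_zero_of_deriv_eq_zero_of_tendsto_atTop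
    (f := fun x => s * P x + ε * deriv P x + (N x - ε * P x ^ 2)) (by fun_prop) (fun x => ?_) ?_ z
  · linear_combination hzero
  · have hD : HasDerivAt (fun x => s * P x + ε * deriv P x + (N x - ε * P x ^ 2))
        (s * deriv P x + ε * deriv (deriv P) x + deriv (fun u => N u - ε * P u ^ 2) x) x :=
      (((hP x).hasDerivAt.const_mul s).add ((hP' x).hasDerivAt.const_mul ε)).add
        ((hN x).sub (((hP x).pow 2).const_mul ε)).hasDerivAt
    rw [hD.deriv]
    linarith [h.ode_P x]
  · simpa using ((h.P_atTop.const_mul s).add (h.dP_atTop.const_mul ε)).add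
      (h.N_atTop.sub ((h.P_atTop.pow 2).const_mul ε))

theorem deriv2_N_eq (h : IsProfile s ε N P) (z : ℝ) :
    deriv (deriv N) z = (-deriv P z + (s + P z) ^ 2) * N z := by
  have hd : deriv N = fun x => -(s + P x) * N x := funext h.deriv_N_eq
  have hD : HasDerivAt (fun x => -(s + P x) * N x) (-deriv P z * N z - (s + P z) * deriv N z) z :=
    (((h.differentiable_P z).hasDerivAt.const_add s).neg.mul
      (h.differentiable_N z).hasDerivAt).congr_deriv
      (by simp only [Pi.neg_apply]; ring)
  rw [hd, hD.deriv, h.deriv_N_eq z]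
  ring

theorem eps_mul_deriv2_P_eq (h : IsProfile s ε N P) (z : ℝ) :
    ε * deriv (deriv P) z = 2 * ε * P z * deriv P z - s * deriv P z - deriv N z := by
  have hP := (h.differentiable_P z).hasDerivAt
  have hd := congrArg (deriv · z)
    (funext h.eps_mul_deriv_P_eq : (fun x => ε * deriv P x) = _)
  have hD : HasDerivAt (fun x => ε * P x ^ 2 - s * P x - N x)
      (2 * ε * P z * deriv P z - s * deriv P z - deriv N z) z :=
    ((((hP.pow 2).const_mul ε).sub (hP.const_mul s)).sub
      (h.differentiable_N z).hasDerivAt).congr_deriv (by ring)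
  rwa [((h.differentiable_deriv_P z).hasDerivAt.const_mul ε).deriv, hD.deriv] at hd

theorem tendsto_deriv2_P (h : IsProfile s ε N P) (hε : ε ≠ 0) {l : Filter ℝ} {p : ℝ}
    (hP : Tendsto P l (𝓝 p)) (hdP : Tendsto (deriv P) l (𝓝 0))
    (hdN : Tendsto (deriv N) l (𝓝 0)) :
    Tendsto (deriv (deriv P)) l (𝓝 0) := by
  have hd : deriv (deriv P)
      = fun z => (2 * ε * P z * deriv P z - s * deriv P z - deriv N z) / ε :=
    funext fun z => by rw [← h.eps_mul_deriv2_P_eq z]; field_simp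
  rw [hd]
  simpa using ((((hP.const_mul (2 * ε)).mul hdP).sub (hdP.const_mul s)).sub hdN).div_const ε

theorem eps_mul_deriv3_P_eq (h : IsProfile s ε N P) (hP3 : ContDiff ℝ 3 P) (z : ℝ) :
    ε * deriv (deriv (deriv P)) z = 2 * ε * (deriv P z ^ 2 + P z * deriv (deriv P) z)
      - s * deriv (deriv P) z - deriv (deriv N) z := by
  have hd := congrArg (deriv · z)
    (funext h.eps_mul_deriv2_P_eq : (fun x => ε * deriv (deriv P) x) = _)
  have hP := (h.differentiable_P z).hasDerivAt
  have hP' := (h.differentiable_deriv_P z).hasDerivAt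
  have hP'' := ((hP3.deriv' (n := 2)).differentiable_deriv_two z).hasDerivAt
  have hD : HasDerivAt (fun x => 2 * ε * P x * deriv P x - s * deriv P x - deriv N x)
      (2 * ε * (deriv P z ^ 2 + P z * deriv (deriv P) z) - s * deriv (deriv P) z
        - deriv (deriv N) z) z :=
    ((((hP.const_mul (2 * ε)).mul hP').sub (hP'.const_mul s)).sub
      (h.differentiable_deriv_N z).hasDerivAt).congr_deriv (by ring)
  rwa [(hP''.const_mul ε).deriv, hD.deriv] at hd

end IsProfile

namespace IsMonotoneProfile

theorem s_pos (h : IsMonotoneProfile s ε N P) : 0 < s := by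
  linarith [h.P_gt 0, h.P_neg 0]

theorem abs_N_le (h : IsMonotoneProfile s ε N P) (z : ℝ) : |N z| ≤ (1 + ε) * s ^ 2 := by
  rw [abs_of_pos (h.N_pos z)]
  exact (h.N_lt z).le

theorem abs_P_le (h : IsMonotoneProfile s ε N P) (z : ℝ) : |P z| ≤ s := by
  rw [abs_of_neg (h.P_neg z)]
  linarith [h.P_gt z]

theorem abs_deriv_N_le (h : IsMonotoneProfile s ε N P) (z : ℝ) :
    |deriv N z| ≤ (1 + ε) * s ^ 3 := by
  have hsP : 0 < s + P z := by linarith [h.P_gt z]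
  calc |deriv N z| = (s + P z) * N z := by
        rw [h.deriv_N_eq z, abs_mul, abs_neg, abs_of_pos hsP, abs_of_pos (h.N_pos z)]
    _ ≤ s * ((1 + ε) * s ^ 2) :=
        mul_le_mul (by linarith [h.P_neg z]) (h.N_lt z).le (h.N_pos z).le h.s_pos.le
    _ = (1 + ε) * s ^ 3 := by ring

theorem deriv_P_le (h : IsMonotoneProfile s ε N P) (hε : 0 ≤ ε) (z : ℝ) :
    deriv P z ≤ (1 + ε) * s ^ 2 := by
  have hs := h.s_pos
  refine le_of_forall_deriv_eq_zero_le h.differentiable_deriv_P.continuous h.dP_atBot h.dP_atTop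
    (by positivity) (fun c hc => ?_) z
  have key : deriv P c * (s - 2 * ε * P c) = (s + P c) * N c := by
    linear_combination h.eps_mul_deriv2_P_eq c - ε * hc - h.deriv_N_eq c
  have hlower : deriv P c * s ≤ deriv P c * (s - 2 * ε * P c) :=
    mul_le_mul_of_nonneg_left (by nlinarith [h.P_neg c]) (h.dP_pos c).le
  have hupper : (s + P c) * N c ≤ s * ((1 + ε) * s ^ 2) :=
    mul_le_mul (by linarith [h.P_neg c]) (h.N_lt c).le (h.N_pos c).le hs.le
  exact le_of_mul_le_mul_right (by linarith) hs

theorem abs_deriv_P_le (h : IsMonotoneProfile s ε N P) (hε : 0 ≤ ε) (z : ℝ) :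
    |deriv P z| ≤ (1 + ε) * s ^ 2 := by
  rw [abs_of_pos (h.dP_pos z)]
  exact h.deriv_P_le hε z

theorem abs_deriv2_N_le (h : IsMonotoneProfile s ε N P) (hε : 0 ≤ ε) (z : ℝ) :
    |deriv (deriv N) z| ≤ ((1 + ε) * s ^ 2) ^ 2 := by
  have hs := h.s_pos
  have hsP : (s + P z) ^ 2 ≤ s ^ 2 := by nlinarith [h.P_gt z, h.P_neg z]
  have hcoeff : |-deriv P z + (s + P z) ^ 2| ≤ (1 + ε) * s ^ 2 :=
    abs_le.2 ⟨by linarith [h.deriv_P_le hε z, sq_nonneg (s + P z)],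
      by nlinarith [h.dP_pos z, sq_nonneg s]⟩
  rw [h.deriv2_N_eq z, abs_mul, sq ((1 + ε) * s ^ 2)]
  exact mul_le_mul hcoeff (h.abs_N_le z) (abs_nonneg _) (by positivity)

theorem abs_deriv2_P_le (h : IsMonotoneProfile s ε N P) (hε : 0 < ε) (hP3 : ContDiff ℝ 3 P)
    (z : ℝ) : |deriv (deriv P) z| ≤ (1 + 2 * ε) * (1 + ε) ^ 2 * s ^ 3 := by
  have hs := h.s_pos
  have hcont : Continuous (deriv (deriv P)) := (hP3.deriv' (n := 2)).continuous_deriv (by norm_num)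
  refine abs_le_of_forall_deriv_eq_zero_abs_le hcont
    (h.tendsto_deriv2_P hε.ne' h.P_atBot h.dP_atBot h.dN_atBot)
    (h.tendsto_deriv2_P hε.ne' h.P_atTop h.dP_atTop h.dN_atTop) (by positivity) (fun c hc => ?_) z
  have key : deriv (deriv P) c * (s - 2 * ε * P c)
      = 2 * ε * deriv P c ^ 2 - deriv (deriv N) c := by
    linear_combination h.eps_mul_deriv3_P_eq hP3 c - ε * hc
  have hfactor : s ≤ s - 2 * ε * P c := by nlinarith [h.P_neg c]
  have hdP_sq : deriv P c ^ 2 ≤ ((1 + ε) * s ^ 2) ^ 2 :=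
    pow_le_pow_left₀ (h.dP_pos c).le (h.deriv_P_le hε.le c) 2
  have hmul : |deriv (deriv P) c| * s ≤ (1 + 2 * ε) * (1 + ε) ^ 2 * s ^ 3 * s :=
    calc |deriv (deriv P) c| * s ≤ |deriv (deriv P) c| * (s - 2 * ε * P c) :=
          mul_le_mul_of_nonneg_left hfactor (abs_nonneg _)
      _ = |2 * ε * deriv P c ^ 2 - deriv (deriv N) c| := by
          rw [← key, abs_mul, abs_of_pos (by linarith : 0 < s - 2 * ε * P c)]
      _ ≤ |2 * ε * deriv P c ^ 2| + |deriv (deriv N) c| := abs_sub _ _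
      _ ≤ 2 * ε * ((1 + ε) * s ^ 2) ^ 2 + ((1 + ε) * s ^ 2) ^ 2 := by
          rw [abs_of_nonneg (by positivity)]
          gcongr
          exact h.abs_deriv2_N_le hε.le c
      _ = (1 + 2 * ε) * (1 + ε) ^ 2 * s ^ 3 * s := by ring
  exact le_of_mul_le_mul_right hmul hs

theorem deriv_one_div_N (h : IsMonotoneProfile s ε N P) :
    deriv (fun u => 1 / N u) = fun z => (s + P z) / N z := by
  funext z
  have hN := h.N_pos z
  have hD : HasDerivAt (fun u => (N u)⁻¹) (-deriv N z / N z ^ 2) z :=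
    (h.differentiable_N z).hasDerivAt.inv hN.ne'
  simp only [one_div]
  rw [hD.deriv, h.deriv_N_eq z]
  field_simp

theorem deriv2_one_div_N (h : IsMonotoneProfile s ε N P) (z : ℝ) :
    deriv (deriv (fun u => 1 / N u)) z = (deriv P z + (s + P z) ^ 2) / N z := by
  have hN := h.N_pos z
  have hD : HasDerivAt (fun u => (s + P u) / N u)
      ((deriv P z * N z - (s + P z) * deriv N z) / N z ^ 2) z :=
    ((h.differentiable_P z).hasDerivAt.const_add s).div (h.differentiable_N z).hasDerivAt hN.ne'
  rw [h.deriv_one_div_N, hD.deriv, h.deriv_N_eq z]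
  field_simp
  ring

theorem deriv_one_div_sqrt_N (h : IsMonotoneProfile s ε N P) (z : ℝ) :
    deriv (fun u => 1 / √(N u)) z = (s + P z) / (2 * √(N z)) := by
  have hN := h.N_pos z
  have hsqrt := (Real.hasDerivAt_sqrt hN.ne').comp z (h.differentiable_N z).hasDerivAt
  have hD : HasDerivAt (fun u => (√(N u))⁻¹)
      (-(1 / (2 * √(N z)) * deriv N z) / √(N z) ^ 2) z :=
    hsqrt.inv (Real.sqrt_pos.2 hN).ne'
  simp only [one_div]
  rw [hD.deriv, h.deriv_N_eq z, Real.sq_sqrt hN.le]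
  field_simp

theorem abs_deriv_one_div_N_add_abs_deriv2_le (h : IsMonotoneProfile s ε N P) (hε : 0 ≤ ε)
    (z : ℝ) : |deriv (fun u => 1 / N u) z| + |deriv (deriv (fun u => 1 / N u)) z|
      ≤ (s + (2 + ε) * s ^ 2) / N z := by
  have hN := h.N_pos z
  have hsP : 0 < s + P z := by linarith [h.P_gt z]
  have hsP_sq : (s + P z) ^ 2 ≤ s ^ 2 := by nlinarith [h.P_neg z]
  rw [h.deriv2_one_div_N z, h.deriv_one_div_N, abs_of_pos (div_pos hsP hN),
    abs_of_pos (div_pos (by positivity [h.dP_pos z]) hN), ← add_div]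
  exact div_le_div_of_nonneg_right (by linarith [h.P_neg z, h.deriv_P_le hε z]) hN.le

theorem abs_deriv_one_div_sqrt_N_le (h : IsMonotoneProfile s ε N P) (z : ℝ) :
    |deriv (fun u => 1 / √(N u)) z| ≤ s / 2 / √(N z) := by
  have hsP : 0 < s + P z := by linarith [h.P_gt z]
  have hsqrt := Real.sqrt_pos.2 (h.N_pos z)
  rw [h.deriv_one_div_sqrt_N z, abs_of_pos (by positivity), div_div]
  gcongr
  linarith [h.P_neg z]

end IsMonotoneProfile

/-- uniform bounds for monotone traveling wave profiles, independent of
`ε ∈ (0, ε₁)`. -/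
theorem profile_uniform_bounds :
    ∀ s > (0:ℝ), ∃ ε₁ > (0:ℝ), ∃ L : ℝ, ∀ ε ∈ Set.Ioo (0:ℝ) ε₁,
      ∀ N P : ℝ → ℝ, IsMonotoneProfile s ε N P →
        ContDiff ℝ 3 N → ContDiff ℝ 3 P →
        ∀ z : ℝ,
          |N z| ≤ L ∧ |deriv N z| ≤ L ∧ |deriv (deriv N) z| ≤ L ∧
          |P z| ≤ L ∧ |deriv P z| ≤ L ∧ |deriv (deriv P) z| ≤ L ∧
          |deriv (fun u => 1 / N u) z| + |deriv (deriv (fun u => 1 / N u)) z| ≤ L / N z ∧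
          |deriv (fun u => 1 / Real.sqrt (N u)) z| ≤ L / Real.sqrt (N z) := by
  intro s hs
  refine ⟨1, one_pos, 12 * (1 + s) ^ 4, ?_⟩
  rintro ε ⟨hε, hε1⟩ N P h - hP3 z
  have hpow : ∀ k ≤ 4, s ^ k ≤ (1 + s) ^ 4 := fun k hk =>
    (pow_le_pow_left₀ hs.le (by linarith) k).trans (pow_le_pow_right₀ (by linarith) hk)
  have h1 : s ≤ (1 + s) ^ 4 := by simpa using hpow 1 (by norm_num)
  have h2 := hpow 2 (by norm_num)
  have h3 := hpow 3 (by norm_num)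
  have h4 := hpow 4 (by norm_num)
  have hN := h.N_pos z
  have hε_s2 : (1 + ε) * s ^ 2 ≤ 2 * s ^ 2 := by nlinarith
  have hε_s2_sq := pow_le_pow_left₀ (by positivity) hε_s2 2
  refine ⟨(h.abs_N_le z).trans (by linarith), (h.abs_deriv_N_le z).trans (by nlinarith),
    (h.abs_deriv2_N_le hε.le z).trans (by nlinarith), (h.abs_P_le z).trans (by linarith),
    (h.abs_deriv_P_le hε.le z).trans (by linarith), (h.abs_deriv2_P_le hε hP3 z).trans ?_,
    (h.abs_deriv_one_div_N_add_abs_deriv2_le hε.le z).trans ?_,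
    (h.abs_deriv_one_div_sqrt_N_le z).trans ?_⟩
  · calc (1 + 2 * ε) * (1 + ε) ^ 2 * s ^ 3 ≤ (1 + 2 * 1) * (1 + 1) ^ 2 * s ^ 3 := by gcongr
      _ ≤ 12 * (1 + s) ^ 4 := by linarith
  · gcongr
    nlinarith
  · gcongr
    nlinarith

end KSWave
end
end

section
/- For every s > 0 there exists ε₁ > 0 such that for every ε ∈ (0, ε₁) and every monotone traveling wave profile (N, 𝒫) for the parameters s and ε, there exists a point z₀ ∈ ℝ satisfying 𝒫(z₀) = -s/2 and N(z₀) ≥ s²/4. -/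
open MeasureTheory Filter Topology

noncomputable section

/-!
Both profile equations are total derivatives, so they integrate once: using the limits at `+∞`
and `-∞` respectively, `N' = -(s + 𝒫) N` and `ε 𝒫' = ε 𝒫² - s 𝒫 - N`. The function
`w = ε 𝒫² - s 𝒫 - N` tends to `0` at `-∞`, and on the level set `w = ε (1 + ε) s²` the monotonicity
bounds force `w' = (2ε𝒫 - s) 𝒫' + (s + 𝒫) N < 0`; so `w` never crosses that level, i.e.
`𝒫' ≤ (1 + ε) s²`. At a point where `𝒫 = -s/2` (intermediate value theorem) this gives
`N = ε s²/4 + s²/2 - ε 𝒫' ≥ s²/2 - ε (1 + ε) s²`, which is at least `s²/4` once `ε (1 + ε) ≤ 1/4`.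
-/

theorem eq_of_hasDerivAt_zero_of_tendsto {f : ℝ → ℝ} {l : Filter ℝ} [l.NeBot] {c : ℝ}
    (hf : ∀ x, HasDerivAt f 0 x) (hc : Tendsto f l (𝓝 c)) (x : ℝ) : f x = c := by
  have hconst : f = fun _ => f x := funext fun y =>
    is_const_of_deriv_eq_zero (fun z => (hf z).differentiableAt) (fun z => (hf z).deriv) y x
  rw [hconst] at hc
  exact tendsto_nhds_unique tendsto_const_nhds hc

theorem le_of_eventually_le_atBot_of_deriv_neg {f f' : ℝ → ℝ} {K : ℝ}
    (hf : ∀ x, HasDerivAt f (f' x) x) (hbot : ∀ᶠ x in atBot, f x ≤ K)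
    (hK : ∀ x, f x = K → f' x < 0) (x : ℝ) : f x ≤ K := by
  obtain ⟨a, ha, hax⟩ := (hbot.and (eventually_le_atBot x)).exists
  exact image_le_of_deriv_right_lt_deriv_boundary (B := fun _ => K) (B' := fun _ => 0)
    (fun y _ => (hf y).continuousAt.continuousWithinAt) (fun y _ => (hf y).hasDerivWithinAt) ha
    (fun _ => hasDerivAt_const _ K) (fun y _ => hK y) ⟨hax, le_rfl⟩

namespace KSWave

variable {s ε : ℝ} {N P : ℝ → ℝ}

namespace IsProfile

theorem exists_P_eq (h : IsProfile s ε N P) {c : ℝ} (hsc : -s < c) (hc : c < 0) :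
    ∃ z, P z = c :=
  mem_range_of_exists_le_of_exists_ge h.differentiable_P.continuous
    (h.P_atBot.eventually (eventually_le_nhds hsc)).exists
    (h.P_atTop.eventually (eventually_ge_nhds hc)).exists

end IsProfile

theorem IsMonotoneProfile.deriv_P_le_s3 (h : IsMonotoneProfile s ε N P) (hε : 0 < ε) (z : ℝ) :
    deriv P z ≤ (1 + ε) * s ^ 2 := by
  have hs : 0 < s := by linarith [h.P_gt z, h.P_neg z]
  have hP := h.differentiable_P
  have hw : ∀ x, HasDerivAt (fun x => ε * P x ^ 2 - s * P x - N x)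
      ((2 * ε * P x - s) * deriv P x + (s + P x) * N x) x := fun x =>
    ((((hP x).hasDerivAt.pow 2).const_mul ε).sub ((hP x).hasDerivAt.const_mul s)).sub
      (h.differentiable_N x).hasDerivAt |>.congr_deriv (by rw [h.deriv_N_eq x]; ring)
  have hlim : Tendsto (fun x => ε * P x ^ 2 - s * P x - N x) atBot
      (𝓝 (ε * (-s) ^ 2 - s * -s - (1 + ε) * s ^ 2)) :=
    (((h.P_atBot.pow 2).const_mul ε).sub (h.P_atBot.const_mul s)).sub h.N_atBot
  have hbot : ∀ᶠ x in atBot, ε * P x ^ 2 - s * P x - N x ≤ ε * ((1 + ε) * s ^ 2) :=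
    hlim.eventually (eventually_le_nhds (by ring_nf; positivity))
  have hlevel : ∀ x, ε * P x ^ 2 - s * P x - N x = ε * ((1 + ε) * s ^ 2) →
      (2 * ε * P x - s) * deriv P x + (s + P x) * N x < 0 := by
    intro x hx
    have hP' : deriv P x = (1 + ε) * s ^ 2 :=
      mul_left_cancel₀ hε.ne' (by rw [h.eps_mul_deriv_P_eq x, hx])
    rw [hP']
    have hPx := h.P_neg x
    have hsPx : 0 < s + P x := by linarith [h.P_gt x]
    nlinarith [mul_pos (mul_pos hε (neg_pos.2 hPx)) (by positivity : 0 < (1 + ε) * s ^ 2),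
      mul_lt_mul_of_pos_left (h.N_lt x) hsPx]
  have := le_of_eventually_le_atBot_of_deriv_neg hw hbot hlevel z
  rw [← h.eps_mul_deriv_P_eq z] at this
  exact le_of_mul_le_mul_left this hε

/-- existence of a point `z₀` in the common transition layer:
`𝒫(z₀) = -s/2` and `N(z₀) ≥ s²/4`. -/
theorem exists_transition_point :
    ∀ s > (0:ℝ), ∃ ε₁ > (0:ℝ), ∀ ε ∈ Set.Ioo (0:ℝ) ε₁,
      ∀ N P : ℝ → ℝ, IsMonotoneProfile s ε N P →
        ∃ z₀ : ℝ, P z₀ = -s / 2 ∧ s ^ 2 / 4 ≤ N z₀ := by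
  intro s hs
  refine ⟨1 / 5, by norm_num, ?_⟩
  rintro ε ⟨hε0, hε1⟩ N P h
  obtain ⟨z₀, hz₀⟩ := h.exists_P_eq (c := -s / 2) (by linarith) (by linarith)
  refine ⟨z₀, hz₀, ?_⟩
  have hεP' := mul_le_mul_of_nonneg_left (h.deriv_P_le_s3 hε0 z₀) hε0.le
  have hN := h.eps_mul_deriv_P_eq z₀
  rw [hz₀] at hN
  have hε : ε * (1 + ε) ≤ 1 / 4 := by nlinarith
  calc s ^ 2 / 4 ≤ s ^ 2 / 2 - ε * (1 + ε) * s ^ 2 := by nlinarith [sq_nonneg s]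
    _ ≤ N z₀ := by nlinarith [sq_nonneg s]

end KSWave
end
end

section
/- Let s > 0 and let N, 𝒫 : ℝ → ℝ be twice continuously differentiable with N(z) > 0 for all z, satisfying -s N' - N'' = (𝒫 N)' on ℝ, with N(z) → 0 and N'(z) → 0 as z → +∞, and with 𝒫 bounded. Then for every z ∈ ℝ one has -N'(z)/N(z) = s + 𝒫(z). -/
open MeasureTheory Filter Topology

noncomputable section

/-! The first profile equation says exactly that the flux `s N + N' + 𝒫 N` has zero derivative,
so it is constant. Since `N, N' → 0` at `+∞` and `𝒫` is bounded, that constant is `0`; dividing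
by `N > 0` gives `-N'/N = s + 𝒫`. -/

theorem eq_of_deriv_eq_zero_of_tendsto_atTop {E : Type*} [NormedAddCommGroup E]
    [NormedSpace ℝ E] {f : ℝ → E} {c : E} (hf : Differentiable ℝ f) (hf' : ∀ x, deriv f x = 0)
    (hlim : Tendsto f atTop (𝓝 c)) (x : ℝ) : f x = c :=
  tendsto_nhds_unique (tendsto_const_nhds.congr fun y => is_const_of_deriv_eq_zero hf hf' x y) hlim

namespace KSWave

def flux (s : ℝ) (N P : ℝ → ℝ) : ℝ → ℝ := fun z => s * N z + deriv N z + P z * N z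

section Flux

variable {s : ℝ} {N P : ℝ → ℝ}

theorem differentiable_flux (hN : ContDiff ℝ 2 N) (hP : Differentiable ℝ P) :
    Differentiable ℝ (flux s N P) :=
  have hN₁ : Differentiable ℝ N := hN.differentiable two_ne_zero
  ((hN₁.const_mul s).add hN.differentiable_deriv_two).add (hP.mul hN₁)

theorem deriv_flux (hN : ContDiff ℝ 2 N) (hP : Differentiable ℝ P) (z : ℝ) :
    deriv (flux s N P) z
      = s * deriv N z + deriv (deriv N) z + deriv (fun u => P u * N u) z := by
  have hN₁ : Differentiable ℝ N := hN.differentiable two_ne_zero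
  have hN₂ : Differentiable ℝ (deriv N) := hN.differentiable_deriv_two
  exact ((((hN₁ z).hasDerivAt.const_mul s).add (hN₂ z).hasDerivAt).add
    ((hP.mul hN₁) z).hasDerivAt).deriv

theorem deriv_flux_eq_zero (hN : ContDiff ℝ 2 N) (hP : Differentiable ℝ P)
    (hode : ∀ z, -s * deriv N z - deriv (deriv N) z = deriv (fun u => P u * N u) z) (z : ℝ) :
    deriv (flux s N P) z = 0 := by
  rw [deriv_flux hN hP, ← hode z]
  ring

theorem tendsto_flux_atTop (hNtop : Tendsto N atTop (𝓝 0))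
    (hdNtop : Tendsto (deriv N) atTop (𝓝 0)) (hPbdd : ∃ C, ∀ z, |P z| ≤ C) :
    Tendsto (flux s N P) atTop (𝓝 0) := by
  obtain ⟨C, hC⟩ := hPbdd
  have hPN : Tendsto (fun z => P z * N z) atTop (𝓝 0) :=
    isBoundedUnder_le_mul_tendsto_zero (isBoundedUnder_of ⟨C, hC⟩) hNtop
  have hsum := ((hNtop.const_mul s).add hdNtop).add hPN
  rw [mul_zero, add_zero, add_zero] at hsum
  exact hsum

end Flux

theorem neg_logderiv_N_eq_general (s : ℝ) (N P : ℝ → ℝ)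
    (hN : ContDiff ℝ 2 N) (hP : ContDiff ℝ 2 P)
    (hNpos : ∀ z : ℝ, 0 < N z)
    (hode : ∀ z : ℝ, -s * deriv N z - deriv (deriv N) z = deriv (fun u => P u * N u) z)
    (hNtop : Tendsto N atTop (nhds 0))
    (hdNtop : Tendsto (deriv N) atTop (nhds 0))
    (hPbdd : ∃ Cb : ℝ, ∀ z : ℝ, |P z| ≤ Cb) :
    ∀ z : ℝ, -deriv N z / N z = s + P z := by
  intro z
  have hP₁ : Differentiable ℝ P := hP.differentiable two_ne_zero
  have hflux : flux s N P z = 0 :=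
    eq_of_deriv_eq_zero_of_tendsto_atTop (differentiable_flux hN hP₁)
      (deriv_flux_eq_zero hN hP₁ hode) (tendsto_flux_atTop hNtop hdNtop hPbdd) z
  unfold flux at hflux
  rw [div_eq_iff (hNpos z).ne']
  linear_combination -hflux

/-- the pointwise relation `-N'/N = s + 𝒫` obtained by integrating the first
profile equation from `z` to `+∞`. -/
theorem neg_logderiv_N_eq (s : ℝ) (hs : 0 < s) (N P : ℝ → ℝ)
    (hN : ContDiff ℝ 2 N) (hP : ContDiff ℝ 2 P)
    (hNpos : ∀ z : ℝ, 0 < N z)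
    (hode : ∀ z : ℝ, -s * deriv N z - deriv (deriv N) z = deriv (fun u => P u * N u) z)
    (hNtop : Tendsto N atTop (nhds 0))
    (hdNtop : Tendsto (deriv N) atTop (nhds 0))
    (hPbdd : ∃ Cb : ℝ, ∀ z : ℝ, |P z| ≤ Cb) :
    ∀ z : ℝ, -deriv N z / N z = s + P z :=
  neg_logderiv_N_eq_general s N P hN hP hNpos hode hNtop hdNtop hPbdd

end KSWave
end
end

section
/- Let s > 0, ε > 0, and let N, 𝒫 : ℝ → ℝ be twice continuously differentiable functions satisfying -s N' - N'' = (𝒫 N)' and -s 𝒫' - ε 𝒫'' = (N - ε 𝒫²)' on ℝ; set P(z) = (𝒫(z), 0). Let φ = (φ¹, φ²) : ℝ² × (0,∞) → ℝ² and ψ : ℝ² × (0,∞) → ℝ be smooth functions satisfying pointwise the perturbation system ∂ₜφ - s ∂_z φ - Δφ = N ∇ψ + (𝒫 ∇·φ, 0) + (∇·φ) ∇ψ and ∂ₜψ - s ∂_z ψ - ε Δψ = -2ε P·∇ψ - ε |∇ψ|² + ∇·φ, where derivatives act in the variables (z,y). Define n(x,y,t) = N(x - st) + (∇·φ)(x -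 st, y, t) and p(x,y,t) = P(x - st) + (∇ψ)(x - st, y, t). Then (n, p) satisfies pointwise the system ∂ₜn - Δn = ∇·(n p) and ∂ₜp - ε Δp = -2ε (p·∇)p + ∇n, where ((p·∇)p)ᵢ = Σ_{k=1,2} p_k ∂_k p_i. -/
open MeasureTheory Filter Topology

noncomputable section

/-! In the moving frame `z = x - s t` the Keller–Segel system for `(n, p)` reads
`(∂ₜ - s ∂_z - Δ) n = ∇·(n p)`, `(∂ₜ - s ∂_z - εΔ) p = -2ε (p·∇)p + ∇n`, and it has to be checked
for `n = N + ∇·φ`, `p = (𝒫, 0) + ∇ψ`.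

Since `n p = (𝒫 N, 0) + (the right-hand side of the φ-system)`, the density equation is the
divergence of the φ-system plus the profile equation for `N`: the operator `∂ₜ - s ∂_z - Δ`
commutes with `∇`.

Since `p` is curl-free, `(p·∇)p = ½ ∇|p|²`, while the ψ-equation says
`(∂ₜ - s ∂_z - εΔ) ψ = -ε |p|² + n - (N - ε 𝒫²)`. Its gradient, plus the profile equation for `𝒫`,
is the velocity equation.
-/

namespace KSWave

open Set

def uncurry3 (f : ℝ → ℝ → ℝ → ℝ) (q : ℝ × ℝ × ℝ) : ℝ := f q.1 q.2.1 q.2.2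

def upperHalfSpace : Set (ℝ × ℝ × ℝ) := univ ×ˢ univ ×ˢ Ioi 0

theorem isOpen_upperHalfSpace : IsOpen upperHalfSpace :=
  isOpen_univ.prod (isOpen_univ.prod isOpen_Ioi)

theorem mem_upperHalfSpace {q : ℝ × ℝ × ℝ} : q ∈ upperHalfSpace ↔ 0 < q.2.2 := by
  simp [upperHalfSpace]

def ContDiffPos (n : WithTop ℕ∞) (f : ℝ → ℝ → ℝ → ℝ) : Prop :=
  ContDiffOn ℝ n (uncurry3 f) upperHalfSpace

section Lines

variable {f : ℝ → ℝ → ℝ → ℝ} {z y t : ℝ}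

theorem hasDerivAt_z_of_differentiableAt (hf : DifferentiableAt ℝ (uncurry3 f) (z, y, t)) :
    HasDerivAt (fun u => f u y t) (fderiv ℝ (uncurry3 f) (z, y, t) (1, 0, 0)) z := by
  simpa [Function.comp_def, Prod.mk_zero_zero, uncurry3] using hf.hasFDerivAt.comp_hasDerivAt z
    ((hasDerivAt_id z).prodMk (hasDerivAt_const z (y, t)))

theorem hasDerivAt_y_of_differentiableAt (hf : DifferentiableAt ℝ (uncurry3 f) (z, y, t)) :
    HasDerivAt (fun v => f z v t) (fderiv ℝ (uncurry3 f) (z, y, t) (0, 1, 0)) y := by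
  simpa [Function.comp_def, uncurry3] using hf.hasFDerivAt.comp_hasDerivAt y
    ((hasDerivAt_const y z).prodMk ((hasDerivAt_id y).prodMk (hasDerivAt_const y t)))

theorem hasDerivAt_t_of_differentiableAt (hf : DifferentiableAt ℝ (uncurry3 f) (z, y, t)) :
    HasDerivAt (fun τ => f z y τ) (fderiv ℝ (uncurry3 f) (z, y, t) (0, 0, 1)) t := by
  simpa [Function.comp_def, uncurry3] using hf.hasFDerivAt.comp_hasDerivAt t
    ((hasDerivAt_const t z).prodMk ((hasDerivAt_const t y).prodMk (hasDerivAt_id t)))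

end Lines

def IsPartialDeriv (D : (ℝ → ℝ → ℝ → ℝ) → ℝ → ℝ → ℝ → ℝ) (v : ℝ × ℝ × ℝ) : Prop :=
  ∀ f q, DifferentiableAt ℝ (uncurry3 f) q → uncurry3 (D f) q = fderiv ℝ (uncurry3 f) q v

theorem isPartialDeriv_dz : IsPartialDeriv DZ (1, 0, 0) :=
  fun _ _ hf => (hasDerivAt_z_of_differentiableAt hf).deriv

theorem isPartialDeriv_dy : IsPartialDeriv DY (0, 1, 0) :=
  fun _ _ hf => (hasDerivAt_y_of_differentiableAt hf).deriv

theorem isPartialDeriv_dt : IsPartialDeriv DT (0, 0, 1) :=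
  fun _ _ hf => (hasDerivAt_t_of_differentiableAt hf).deriv

namespace ContDiffPos

variable {n : WithTop ℕ∞} {f g : ℝ → ℝ → ℝ → ℝ} {z y t : ℝ}

theorem of_le {m : WithTop ℕ∞} (hf : ContDiffPos n f) (hmn : m ≤ n) : ContDiffPos m f :=
  ContDiffOn.of_le hf hmn

theorem add (hf : ContDiffPos n f) (hg : ContDiffPos n g) :
    ContDiffPos n (fun z y t => f z y t + g z y t) :=
  ContDiffOn.add hf hg

theorem contDiffAt (hf : ContDiffPos n f) (ht : 0 < t) : ContDiffAt ℝ n (uncurry3 f) (z, y, t) :=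
  ContDiffOn.contDiffAt hf (isOpen_upperHalfSpace.mem_nhds (mem_upperHalfSpace.mpr ht))

theorem differentiableAt (hf : ContDiffPos 1 f) (ht : 0 < t) :
    DifferentiableAt ℝ (uncurry3 f) (z, y, t) :=
  (hf.contDiffAt ht).differentiableAt one_ne_zero

theorem hasDerivAt_z (hf : ContDiffPos 1 f) (ht : 0 < t) :
    HasDerivAt (fun u => f u y t) (DZ f z y t) z :=
  (hasDerivAt_z_of_differentiableAt (hf.differentiableAt ht)).differentiableAt.hasDerivAt

theorem hasDerivAt_y (hf : ContDiffPos 1 f) (ht : 0 < t) :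
    HasDerivAt (fun v => f z v t) (DY f z y t) y :=
  (hasDerivAt_y_of_differentiableAt (hf.differentiableAt ht)).differentiableAt.hasDerivAt

theorem hasDerivAt_t (hf : ContDiffPos 1 f) (ht : 0 < t) :
    HasDerivAt (fun τ => f z y τ) (DT f z y t) t :=
  (hasDerivAt_t_of_differentiableAt (hf.differentiableAt ht)).differentiableAt.hasDerivAt

end ContDiffPos

namespace IsPartialDeriv

variable {D D' : (ℝ → ℝ → ℝ → ℝ) → ℝ → ℝ → ℝ → ℝ} {v w : ℝ × ℝ × ℝ}
  {n : WithTop ℕ∞} {f : ℝ → ℝ → ℝ → ℝ} {z y t : ℝ}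

theorem contDiffPos (hD : IsPartialDeriv D v) (hf : ContDiffPos (n + 1) f) :
    ContDiffPos n (D f) := by
  refine ((hf.fderiv_of_isOpen isOpen_upperHalfSpace le_rfl).clm_apply contDiffOn_const).congr
    fun q hq => hD f q ?_
  obtain ⟨z, y, t⟩ := q
  exact (hf.of_le le_add_self).differentiableAt (mem_upperHalfSpace.mp hq)

theorem apply_eq_fderiv_fderiv (hD : IsPartialDeriv D v) (hD' : IsPartialDeriv D' w)
    (hf : ContDiffPos 2 f) (ht : 0 < t) :
    D (D' f) z y t = fderiv ℝ (fderiv ℝ (uncurry3 f)) (z, y, t) v w := by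
  have hfD' : uncurry3 (D' f) =ᶠ[𝓝 (z, y, t)] fun p => fderiv ℝ (uncurry3 f) p w := by
    filter_upwards [isOpen_upperHalfSpace.mem_nhds (mem_upperHalfSpace.mpr ht)] with ⟨a, b, c⟩ hq
    exact hD' f _ ((hf.of_le one_le_two).differentiableAt (mem_upperHalfSpace.mp hq))
  have hdd : DifferentiableAt ℝ (fderiv ℝ (uncurry3 f)) (z, y, t) :=
    ((hf.contDiffAt ht).fderiv_right (m := 1) le_rfl).differentiableAt one_ne_zero
  have hD'f : ContDiffPos 1 (D' f) := hD'.contDiffPos hf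
  calc D (D' f) z y t = fderiv ℝ (uncurry3 (D' f)) (z, y, t) v :=
        hD (D' f) (z, y, t) (hD'f.differentiableAt ht)
    _ = fderiv ℝ (fderiv ℝ (uncurry3 f)) (z, y, t) v w := by
        rw [hfD'.fderiv_eq, fderiv_clm_apply hdd (differentiableAt_const w)]
        simp

theorem comm (hD : IsPartialDeriv D v) (hD' : IsPartialDeriv D' w) (hf : ContDiffPos 2 f)
    (ht : 0 < t) : D (D' f) z y t = D' (D f) z y t := by
  rw [hD.apply_eq_fderiv_fderiv hD' hf ht, hD'.apply_eq_fderiv_fderiv hD hf ht,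
    ((hf.contDiffAt ht).isSymmSndFDerivAt (by simp)).eq]

end IsPartialDeriv

theorem dz_congr {f g : ℝ → ℝ → ℝ → ℝ} {z y t : ℝ} (h : ∀ u, f u y t = g u y t) :
    DZ f z y t = DZ g z y t := by
  simp only [DZ, h]

theorem dy_congr {f g : ℝ → ℝ → ℝ → ℝ} {z y t : ℝ} (h : ∀ v, f z v t = g z v t) :
    DY f z y t = DY g z y t := by
  simp only [DY, h]

namespace ContDiffPos

variable {f g : ℝ → ℝ → ℝ → ℝ} {z y t : ℝ}

theorem dz_add (hf : ContDiffPos 1 f) (hg : ContDiffPos 1 g) (ht : 0 < t) :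
    DZ (fun z y t => f z y t + g z y t) z y t = DZ f z y t + DZ g z y t :=
  ((hf.hasDerivAt_z ht).add (hg.hasDerivAt_z ht)).deriv

theorem dy_add (hf : ContDiffPos 1 f) (hg : ContDiffPos 1 g) (ht : 0 < t) :
    DY (fun z y t => f z y t + g z y t) z y t = DY f z y t + DY g z y t :=
  ((hf.hasDerivAt_y ht).add (hg.hasDerivAt_y ht)).deriv

theorem dt_add (hf : ContDiffPos 1 f) (hg : ContDiffPos 1 g) (ht : 0 < t) :
    DT (fun z y t => f z y t + g z y t) z y t = DT f z y t + DT g z y t :=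
  ((hf.hasDerivAt_t ht).add (hg.hasDerivAt_t ht)).deriv

theorem lap_add (hf : ContDiffPos 2 f) (hg : ContDiffPos 2 g) (ht : 0 < t) :
    LAP (fun z y t => f z y t + g z y t) z y t = LAP f z y t + LAP g z y t := by
  have hf1 := hf.of_le one_le_two
  have hg1 := hg.of_le one_le_two
  rw [LAP, dz_congr (g := fun z y t => DZ f z y t + DZ g z y t) fun u => hf1.dz_add hg1 ht,
    dy_congr (g := fun z y t => DY f z y t + DY g z y t) fun v => hf1.dy_add hg1 ht,
    (isPartialDeriv_dz.contDiffPos hf).dz_add (isPartialDeriv_dz.contDiffPos hg) ht,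
    (isPartialDeriv_dy.contDiffPos hf).dy_add (isPartialDeriv_dy.contDiffPos hg) ht, LAP, LAP]
  ring

end ContDiffPos

theorem contDiffPos_liftZ {n : WithTop ℕ∞} {N : ℝ → ℝ} (hN : ContDiff ℝ n N) :
    ContDiffPos n (fun z _ _ => N z) :=
  (hN.comp contDiff_fst).contDiffOn

def advDiff (s c : ℝ) (f : ℝ → ℝ → ℝ → ℝ) : ℝ → ℝ → ℝ → ℝ :=
  fun z y t => DT f z y t - s * DZ f z y t - c * LAP f z y t

section AdvDiff

variable {s c : ℝ} {f g : ℝ → ℝ → ℝ → ℝ} {z y t : ℝ}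

theorem advDiff_liftZ (N : ℝ → ℝ) :
    advDiff s c (fun z _ _ => N z) z y t = -s * deriv N z - c * deriv (deriv N) z := by
  simp [advDiff, LAP, DT, DZ, DY]

theorem ContDiffPos.advDiff_add (hf : ContDiffPos 2 f) (hg : ContDiffPos 2 g) (ht : 0 < t) :
    advDiff s c (fun z y t => f z y t + g z y t) z y t
      = advDiff s c f z y t + advDiff s c g z y t := by
  have hf1 := hf.of_le one_le_two
  have hg1 := hg.of_le one_le_two
  simp only [advDiff, hf1.dt_add hg1 ht, hf1.dz_add hg1 ht, hf.lap_add hg ht]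
  ring

theorem ContDiffPos.hasDerivAt_z_advDiff (hf : ContDiffPos 3 f) (ht : 0 < t) :
    HasDerivAt (fun u => advDiff s c f u y t) (advDiff s c (DZ f) z y t) z := by
  have hZ : ContDiffPos 2 (DZ f) := isPartialDeriv_dz.contDiffPos hf
  have hY : ContDiffPos 2 (DY f) := isPartialDeriv_dy.contDiffPos hf
  have h : HasDerivAt (fun u => advDiff s c f u y t)
      (DZ (DT f) z y t - s * DZ (DZ f) z y t
        - c * (DZ (DZ (DZ f)) z y t + DZ (DY (DY f)) z y t)) z :=
    ((((isPartialDeriv_dt.contDiffPos hf).of_le one_le_two).hasDerivAt_z ht).sub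
      (((hZ.of_le one_le_two).hasDerivAt_z ht).const_mul s)).sub
      ((((isPartialDeriv_dz.contDiffPos hZ).hasDerivAt_z ht).add
        ((isPartialDeriv_dy.contDiffPos hY).hasDerivAt_z ht)).const_mul c)
  convert h using 1
  have hf2 : ContDiffPos 2 f := hf.of_le (by norm_num)
  rw [advDiff, LAP, isPartialDeriv_dz.comm isPartialDeriv_dt hf2 ht,
    isPartialDeriv_dz.comm isPartialDeriv_dy hY ht,
    dy_congr (g := DY (DZ f)) fun v => isPartialDeriv_dz.comm isPartialDeriv_dy hf2 ht]

theorem ContDiffPos.hasDerivAt_y_advDiff (hf : ContDiffPos 3 f) (ht : 0 < t) :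
    HasDerivAt (fun v => advDiff s c f z v t) (advDiff s c (DY f) z y t) y := by
  have hZ : ContDiffPos 2 (DZ f) := isPartialDeriv_dz.contDiffPos hf
  have hY : ContDiffPos 2 (DY f) := isPartialDeriv_dy.contDiffPos hf
  have h : HasDerivAt (fun v => advDiff s c f z v t)
      (DY (DT f) z y t - s * DY (DZ f) z y t
        - c * (DY (DZ (DZ f)) z y t + DY (DY (DY f)) z y t)) y :=
    ((((isPartialDeriv_dt.contDiffPos hf).of_le one_le_two).hasDerivAt_y ht).sub
      (((hZ.of_le one_le_two).hasDerivAt_y ht).const_mul s)).sub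
      ((((isPartialDeriv_dz.contDiffPos hZ).hasDerivAt_y ht).add
        ((isPartialDeriv_dy.contDiffPos hY).hasDerivAt_y ht)).const_mul c)
  convert h using 1
  have hf2 : ContDiffPos 2 f := hf.of_le (by norm_num)
  rw [advDiff, LAP, isPartialDeriv_dy.comm isPartialDeriv_dt hf2 ht,
    isPartialDeriv_dy.comm isPartialDeriv_dz hZ ht,
    dz_congr (g := DZ (DY f)) fun u => isPartialDeriv_dy.comm isPartialDeriv_dz hf2 ht,
    isPartialDeriv_dy.comm isPartialDeriv_dz hf2 ht]

theorem ContDiffPos.dz_advDiff (hf : ContDiffPos 3 f) (ht : 0 < t) :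
    DZ (advDiff s c f) z y t = advDiff s c (DZ f) z y t :=
  (hf.hasDerivAt_z_advDiff ht).deriv

theorem ContDiffPos.dy_advDiff (hf : ContDiffPos 3 f) (ht : 0 < t) :
    DY (advDiff s c f) z y t = advDiff s c (DY f) z y t :=
  (hf.hasDerivAt_y_advDiff ht).deriv

end AdvDiff

def moving (s : ℝ) (f : ℝ → ℝ → ℝ → ℝ) : ℝ → ℝ → ℝ → ℝ := fun x y t => f (x - s * t) y t

section Moving

variable {s : ℝ} {f : ℝ → ℝ → ℝ → ℝ}

theorem dz_moving : DZ (moving s f) = moving s (DZ f) := by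
  funext x y t
  exact deriv_comp_sub_const (f := fun u => f u y t) (a := s * t) (x := x)

theorem dy_moving : DY (moving s f) = moving s (DY f) := rfl

theorem lap_moving : LAP (moving s f) = moving s (LAP f) := by
  funext x y t
  simp only [LAP, dz_moving, dy_moving]
  rfl

theorem dt_moving {x y t : ℝ} (hf : DifferentiableAt ℝ (uncurry3 f) (x - s * t, y, t)) :
    DT (moving s f) x y t = DT f (x - s * t) y t - s * DZ f (x - s * t) y t := by
  have hline : HasDerivAt (fun τ => ((x - s * τ, y, τ) : ℝ × ℝ × ℝ))
      (-s • (1, 0, 0) + (0, 0, 1)) t := by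
    have h : HasDerivAt (fun τ : ℝ => x - s * τ) (-s) t := by
      simpa using ((hasDerivAt_id t).const_mul s).const_sub x
    simpa using h.prodMk ((hasDerivAt_const t y).prodMk (hasDerivAt_id t))
  have h := hf.hasFDerivAt.comp_hasDerivAt t hline
  rw [map_add, map_smul, ← isPartialDeriv_dz f _ hf, ← isPartialDeriv_dt f _ hf] at h
  calc DT (moving s f) x y t = deriv (uncurry3 f ∘ fun τ => (x - s * τ, y, τ)) t := rfl
    _ = _ := by rw [h.deriv]; simp only [uncurry3, smul_eq_mul]; ring

end Moving

def IsMovingNPSolutionAt (s ε : ℝ) (n p1 p2 : ℝ → ℝ → ℝ → ℝ) (z y t : ℝ) : Prop :=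
  (advDiff s 1 n z y t
      = DZ (fun a b c => n a b c * p1 a b c) z y t + DY (fun a b c => n a b c * p2 a b c) z y t)
  ∧ (advDiff s ε p1 z y t
      = -(2 * ε) * (p1 z y t * DZ p1 z y t + p2 z y t * DY p1 z y t) + DZ n z y t)
  ∧ (advDiff s ε p2 z y t
      = -(2 * ε) * (p1 z y t * DZ p2 z y t + p2 z y t * DY p2 z y t) + DY n z y t)

theorem IsMovingNPSolutionAt.isNPSolutionAt_moving {s ε x y t : ℝ} {n p1 p2 : ℝ → ℝ → ℝ → ℝ}
    (hn : DifferentiableAt ℝ (uncurry3 n) (x - s * t, y, t))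
    (hp1 : DifferentiableAt ℝ (uncurry3 p1) (x - s * t, y, t))
    (hp2 : DifferentiableAt ℝ (uncurry3 p2) (x - s * t, y, t))
    (h : IsMovingNPSolutionAt s ε n p1 p2 (x - s * t) y t) :
    IsNPSolutionAt ε (moving s n) (moving s p1) (moving s p2) x y t := by
  have moving_mul : ∀ f g : ℝ → ℝ → ℝ → ℝ, (fun a b c => moving s f a b c * moving s g a b c)
      = moving s (fun a b c => f a b c * g a b c) := fun _ _ => rfl
  obtain ⟨h1, h2, h3⟩ := h
  simp only [advDiff] at h1 h2 h3
  simp only [IsNPSolutionAt, dt_moving hn, dt_moving hp1, dt_moving hp2, lap_moving, moving_mul,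
    dz_moving, dy_moving]
  refine ⟨?_, ?_, ?_⟩ <;> simp only [KSWave.moving]
  · linear_combination h1
  · linear_combination h2
  · linear_combination h3

def perturbedDensity (N : ℝ → ℝ) (φ1 φ2 : ℝ → ℝ → ℝ → ℝ) : ℝ → ℝ → ℝ → ℝ :=
  fun z y t => N z + divphi φ1 φ2 z y t

def perturbedVelocityZ (P : ℝ → ℝ) (ψ : ℝ → ℝ → ℝ → ℝ) : ℝ → ℝ → ℝ → ℝ :=
  fun z y t => P z + DZ ψ z y t

section Perturbation

variable {s ε : ℝ} {N P : ℝ → ℝ} {φ1 φ2 ψ n : ℝ → ℝ → ℝ → ℝ} {z y t : ℝ}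

theorem contDiffPos_perturbedDensity (hN : ContDiff ℝ 2 N) (hφ1 : ContDiffPos 3 φ1)
    (hφ2 : ContDiffPos 3 φ2) : ContDiffPos 2 (perturbedDensity N φ1 φ2) :=
  (contDiffPos_liftZ hN).add
    ((isPartialDeriv_dz.contDiffPos hφ1).add (isPartialDeriv_dy.contDiffPos hφ2))

theorem contDiffPos_perturbedVelocityZ (hP : ContDiff ℝ 2 P) (hψ : ContDiffPos 3 ψ) :
    ContDiffPos 2 (perturbedVelocityZ P ψ) :=
  (contDiffPos_liftZ hP).add (isPartialDeriv_dz.contDiffPos hψ)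

theorem advDiff_perturbedDensity (hN : ContDiff ℝ 2 N) (hP : ContDiff ℝ 2 P)
    (hodeN : ∀ z : ℝ, -s * deriv N z - deriv (deriv N) z = deriv (fun u => P u * N u) z)
    (hφ1 : ContDiffPos 3 φ1) (hφ2 : ContDiffPos 3 φ2)
    (heq_φ1 : ∀ z y t : ℝ, 0 < t →
      DT φ1 z y t - s * DZ φ1 z y t - LAP φ1 z y t
        = N z * DZ ψ z y t + P z * divphi φ1 φ2 z y t + divphi φ1 φ2 z y t * DZ ψ z y t)
    (heq_φ2 : ∀ z y t : ℝ, 0 < t →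
      DT φ2 z y t - s * DZ φ2 z y t - LAP φ2 z y t
        = N z * DY ψ z y t + divphi φ1 φ2 z y t * DY ψ z y t)
    (ht : 0 < t) :
    advDiff s 1 (perturbedDensity N φ1 φ2) z y t
      = DZ (fun a b c => perturbedDensity N φ1 φ2 a b c * perturbedVelocityZ P ψ a b c) z y t
        + DY (fun a b c => perturbedDensity N φ1 φ2 a b c * DY ψ a b c) z y t := by
  have hfluxZ : ∀ u, perturbedDensity N φ1 φ2 u y t * perturbedVelocityZ P ψ u y t
      = P u * N u + advDiff s 1 φ1 u y t := fun u => by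
    simp only [perturbedDensity, perturbedVelocityZ, advDiff, one_mul]
    linear_combination -heq_φ1 u y t ht
  have hfluxY : ∀ v, perturbedDensity N φ1 φ2 z v t * DY ψ z v t = advDiff s 1 φ2 z v t :=
    fun v => by
      simp only [perturbedDensity, advDiff, one_mul]
      linear_combination -heq_φ2 z v t ht
  have hPN : HasDerivAt (fun u => P u * N u) (deriv (fun u => P u * N u) z) z :=
    ((hP.differentiable two_ne_zero).mul (hN.differentiable two_ne_zero)) z |>.hasDerivAt
  have hsplit : advDiff s 1 (perturbedDensity N φ1 φ2) z y t = advDiff s 1 (fun z _ _ => N z) z y t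
      + (advDiff s 1 (DZ φ1) z y t + advDiff s 1 (DY φ2) z y t) := by
    rw [← (isPartialDeriv_dz.contDiffPos hφ1).advDiff_add (isPartialDeriv_dy.contDiffPos hφ2) ht]
    exact (contDiffPos_liftZ hN).advDiff_add
      ((isPartialDeriv_dz.contDiffPos hφ1).add (isPartialDeriv_dy.contDiffPos hφ2)) ht
  have hdivZ : DZ (fun a b c => P a * N a + advDiff s 1 φ1 a b c) z y t
      = deriv (fun u => P u * N u) z + advDiff s 1 (DZ φ1) z y t :=
    (hPN.add (hφ1.hasDerivAt_z_advDiff ht)).deriv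
  rw [dz_congr (g := fun a b c => P a * N a + advDiff s 1 φ1 a b c) hfluxZ,
    dy_congr (g := advDiff s 1 φ2) hfluxY, hdivZ, hφ2.dy_advDiff ht, hsplit,
    advDiff_liftZ, ← hodeN]
  ring

theorem advDiff_eq_potential
    (heq_ψ : ∀ z y t : ℝ, 0 < t →
      DT ψ z y t - s * DZ ψ z y t - ε * LAP ψ z y t
        = -(2 * ε) * (P z * DZ ψ z y t) - ε * ((DZ ψ z y t) ^ 2 + (DY ψ z y t) ^ 2)
          + divphi φ1 φ2 z y t)
    (ht : 0 < t) :
    advDiff s ε ψ z y t = -ε * (perturbedVelocityZ P ψ z y t ^ 2 + DY ψ z y t ^ 2)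
      + perturbedDensity N φ1 φ2 z y t - (N z - ε * P z ^ 2) := by
  simp only [advDiff, perturbedVelocityZ, perturbedDensity]
  linear_combination heq_ψ z y t ht

theorem dy_perturbedVelocityZ (hψ : ContDiffPos 2 ψ) (ht : 0 < t) :
    DY (perturbedVelocityZ P ψ) z y t = DZ (DY ψ) z y t := by
  rw [isPartialDeriv_dz.comm isPartialDeriv_dy hψ ht]
  exact deriv_const_add (P z)

theorem advDiff_perturbedVelocityZ_of_potential (hN : Differentiable ℝ N) (hP : ContDiff ℝ 2 P)
    (hodeP : ∀ z : ℝ, -s * deriv P z - ε * deriv (deriv P) z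
        = deriv (fun u => N u - ε * (P u) ^ 2) z)
    (hψ : ContDiffPos 3 ψ) (hn : ContDiffPos 1 n)
    (hpot : ∀ z y t : ℝ, 0 < t → advDiff s ε ψ z y t
      = -ε * (perturbedVelocityZ P ψ z y t ^ 2 + DY ψ z y t ^ 2) + n z y t - (N z - ε * P z ^ 2))
    (ht : 0 < t) :
    advDiff s ε (perturbedVelocityZ P ψ) z y t
      = -(2 * ε) * (perturbedVelocityZ P ψ z y t * DZ (perturbedVelocityZ P ψ) z y t
          + DY ψ z y t * DY (perturbedVelocityZ P ψ) z y t) + DZ n z y t := by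
  have hp1 : ContDiffPos 1 (perturbedVelocityZ P ψ) :=
    (contDiffPos_perturbedVelocityZ hP hψ).of_le one_le_two
  have hψ2 : ContDiffPos 2 ψ := hψ.of_le (by norm_num)
  have hψy : ContDiffPos 1 (DY ψ) := isPartialDeriv_dy.contDiffPos hψ2
  have hQ : HasDerivAt (fun u => N u - ε * P u ^ 2) (deriv (fun u => N u - ε * P u ^ 2) z) z :=
    ((hN z).sub ((((hP.differentiable two_ne_zero) z).pow 2).const_mul ε)).hasDerivAt
  have hgrad : advDiff s ε (DZ ψ) z y t
      = -ε * (2 * perturbedVelocityZ P ψ z y t * DZ (perturbedVelocityZ P ψ) z y t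
          + 2 * DY ψ z y t * DZ (DY ψ) z y t) + DZ n z y t
        - deriv (fun u => N u - ε * P u ^ 2) z := by
    rw [← hψ.dz_advDiff ht, dz_congr (g := fun a b c => -ε * (perturbedVelocityZ P ψ a b c ^ 2
      + DY ψ a b c ^ 2) + n a b c - (N a - ε * P a ^ 2)) fun u => hpot u y t ht]
    refine (((((hp1.hasDerivAt_z ht).pow 2).add ((hψy.hasDerivAt_z ht).pow 2)).const_mul (-ε)).add
      (hn.hasDerivAt_z ht) |>.sub hQ).deriv.trans ?_
    push_cast
    ring
  have hsplit : advDiff s ε (perturbedVelocityZ P ψ) z y t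
      = advDiff s ε (fun z _ _ => P z) z y t + advDiff s ε (DZ ψ) z y t :=
    (contDiffPos_liftZ hP).advDiff_add (isPartialDeriv_dz.contDiffPos hψ) ht
  rw [hsplit, advDiff_liftZ, hodeP, hgrad, dy_perturbedVelocityZ hψ2 ht]
  ring

theorem advDiff_dy_of_potential (hP : ContDiff ℝ 2 P) (hψ : ContDiffPos 3 ψ)
    (hn : ContDiffPos 1 n)
    (hpot : ∀ z y t : ℝ, 0 < t → advDiff s ε ψ z y t
      = -ε * (perturbedVelocityZ P ψ z y t ^ 2 + DY ψ z y t ^ 2) + n z y t - (N z - ε * P z ^ 2))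
    (ht : 0 < t) :
    advDiff s ε (DY ψ) z y t
      = -(2 * ε) * (perturbedVelocityZ P ψ z y t * DZ (DY ψ) z y t
          + DY ψ z y t * DY (DY ψ) z y t) + DY n z y t := by
  have hp1 : ContDiffPos 1 (perturbedVelocityZ P ψ) :=
    (contDiffPos_perturbedVelocityZ hP hψ).of_le one_le_two
  have hψ2 : ContDiffPos 2 ψ := hψ.of_le (by norm_num)
  have hψy : ContDiffPos 1 (DY ψ) := isPartialDeriv_dy.contDiffPos hψ2
  rw [← hψ.dy_advDiff ht, dy_congr (g := fun a b c => -ε * (perturbedVelocityZ P ψ a b c ^ 2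
    + DY ψ a b c ^ 2) + n a b c - (N a - ε * P a ^ 2)) fun v => hpot z v t ht]
  refine (((((hp1.hasDerivAt_y ht).pow 2).add ((hψy.hasDerivAt_y ht).pow 2)).const_mul (-ε)).add
    (hn.hasDerivAt_y ht) |>.sub (hasDerivAt_const y (N z - ε * P z ^ 2))).deriv.trans ?_
  rw [dy_perturbedVelocityZ hψ2 ht]
  push_cast
  ring

end Perturbation

theorem perturbation_reconstructs_np_general (s ε : ℝ)
    (N P : ℝ → ℝ) (hN : ContDiff ℝ 2 N) (hP : ContDiff ℝ 2 P)
    (hodeN : ∀ z : ℝ, -s * deriv N z - deriv (deriv N) z = deriv (fun u => P u * N u) z)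
    (hodeP : ∀ z : ℝ, -s * deriv P z - ε * deriv (deriv P) z
        = deriv (fun u => N u - ε * (P u) ^ 2) z)
    (φ1 φ2 ψ : ℝ → ℝ → ℝ → ℝ)
    (hφ1 : ContDiffOn ℝ (⊤ : ℕ∞) (fun q : ℝ × ℝ × ℝ => φ1 q.1 q.2.1 q.2.2)
      (Set.univ ×ˢ Set.univ ×ˢ Set.Ioi 0))
    (hφ2 : ContDiffOn ℝ (⊤ : ℕ∞) (fun q : ℝ × ℝ × ℝ => φ2 q.1 q.2.1 q.2.2)
      (Set.univ ×ˢ Set.univ ×ˢ Set.Ioi 0))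
    (hψ : ContDiffOn ℝ (⊤ : ℕ∞) (fun q : ℝ × ℝ × ℝ => ψ q.1 q.2.1 q.2.2)
      (Set.univ ×ˢ Set.univ ×ˢ Set.Ioi 0))
    -- the perturbation system, pointwise for t > 0
    (heq_φ1 : ∀ z y t : ℝ, 0 < t →
      DT φ1 z y t - s * DZ φ1 z y t - LAP φ1 z y t
        = N z * DZ ψ z y t + P z * divphi φ1 φ2 z y t + divphi φ1 φ2 z y t * DZ ψ z y t)
    (heq_φ2 : ∀ z y t : ℝ, 0 < t →
      DT φ2 z y t - s * DZ φ2 z y t - LAP φ2 z y t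
        = N z * DY ψ z y t + divphi φ1 φ2 z y t * DY ψ z y t)
    (heq_ψ : ∀ z y t : ℝ, 0 < t →
      DT ψ z y t - s * DZ ψ z y t - ε * LAP ψ z y t
        = -(2 * ε) * (P z * DZ ψ z y t) - ε * ((DZ ψ z y t) ^ 2 + (DY ψ z y t) ^ 2)
          + divphi φ1 φ2 z y t) :
    ∀ n p1 p2 : ℝ → ℝ → ℝ → ℝ,
      n = (fun x y t => N (x - s * t) + divphi φ1 φ2 (x - s * t) y t) →
      p1 = (fun x y t => P (x - s * t) + DZ ψ (x - s * t) y t) →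
      p2 = (fun x y t => DY ψ (x - s * t) y t) →
      ∀ x y t : ℝ, 0 < t → IsNPSolutionAt ε n p1 p2 x y t := by
  rintro _ _ _ rfl rfl rfl x y t ht
  have h3 : (3 : WithTop ℕ∞) ≤ (⊤ : ℕ∞) := WithTop.coe_le_coe.mpr le_top
  have hφ1 : ContDiffPos 3 φ1 := hφ1.of_le h3
  have hφ2 : ContDiffPos 3 φ2 := hφ2.of_le h3
  have hψ : ContDiffPos 3 ψ := hψ.of_le h3
  have hn := contDiffPos_perturbedDensity hN hφ1 hφ2
  have hp1 := contDiffPos_perturbedVelocityZ hP hψ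
  have hp2 : ContDiffPos 2 (DY ψ) := isPartialDeriv_dy.contDiffPos hψ
  have hpot := fun z y t (ht : 0 < t) => advDiff_eq_potential (N := N) (z := z) (y := y) heq_ψ ht
  have hn1 := hn.of_le one_le_two
  exact IsMovingNPSolutionAt.isNPSolutionAt_moving (hn1.differentiableAt ht)
    ((hp1.of_le one_le_two).differentiableAt ht) ((hp2.of_le one_le_two).differentiableAt ht)
    ⟨advDiff_perturbedDensity hN hP hodeN hφ1 hφ2 heq_φ1 heq_φ2 ht,
      advDiff_perturbedVelocityZ_of_potential (hN.differentiable two_ne_zero) hP hodeP hψ hn1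
        hpot ht,
      advDiff_dy_of_potential hP hψ hn1 hpot ht⟩

/-- if `(φ, ψ)` solves the perturbation system, then
`n = N(x-st) + (∇·φ)(x-st, y, t)`, `p = P(x-st) + (∇ψ)(x-st, y, t)` solves the
transformed Keller–Segel system. -/
theorem perturbation_reconstructs_np (s ε : ℝ) (hs : 0 < s) (hε : 0 < ε)
    (N P : ℝ → ℝ) (hN : ContDiff ℝ 2 N) (hP : ContDiff ℝ 2 P)
    (hodeN : ∀ z : ℝ, -s * deriv N z - deriv (deriv N) z = deriv (fun u => P u * N u) z)
    (hodeP : ∀ z : ℝ, -s * deriv P z - ε * deriv (deriv P) z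
        = deriv (fun u => N u - ε * (P u) ^ 2) z)
    (φ1 φ2 ψ : ℝ → ℝ → ℝ → ℝ)
    (hφ1 : ContDiffOn ℝ (⊤ : ℕ∞) (fun q : ℝ × ℝ × ℝ => φ1 q.1 q.2.1 q.2.2)
      (Set.univ ×ˢ Set.univ ×ˢ Set.Ioi 0))
    (hφ2 : ContDiffOn ℝ (⊤ : ℕ∞) (fun q : ℝ × ℝ × ℝ => φ2 q.1 q.2.1 q.2.2)
      (Set.univ ×ˢ Set.univ ×ˢ Set.Ioi 0))
    (hψ : ContDiffOn ℝ (⊤ : ℕ∞) (fun q : ℝ × ℝ × ℝ => ψ q.1 q.2.1 q.2.2)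
      (Set.univ ×ˢ Set.univ ×ˢ Set.Ioi 0))
    -- the perturbation system, pointwise for t > 0
    (heq_φ1 : ∀ z y t : ℝ, 0 < t →
      DT φ1 z y t - s * DZ φ1 z y t - LAP φ1 z y t
        = N z * DZ ψ z y t + P z * divphi φ1 φ2 z y t + divphi φ1 φ2 z y t * DZ ψ z y t)
    (heq_φ2 : ∀ z y t : ℝ, 0 < t →
      DT φ2 z y t - s * DZ φ2 z y t - LAP φ2 z y t
        = N z * DY ψ z y t + divphi φ1 φ2 z y t * DY ψ z y t)
    (heq_ψ : ∀ z y t : ℝ, 0 < t →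
      DT ψ z y t - s * DZ ψ z y t - ε * LAP ψ z y t
        = -(2 * ε) * (P z * DZ ψ z y t) - ε * ((DZ ψ z y t) ^ 2 + (DY ψ z y t) ^ 2)
          + divphi φ1 φ2 z y t) :
    ∀ n p1 p2 : ℝ → ℝ → ℝ → ℝ,
      n = (fun x y t => N (x - s * t) + divphi φ1 φ2 (x - s * t) y t) →
      p1 = (fun x y t => P (x - s * t) + DZ ψ (x - s * t) y t) →
      p2 = (fun x y t => DY ψ (x - s * t) y t) →
      ∀ x y t : ℝ, 0 < t → IsNPSolutionAt ε n p1 p2 x y t :=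
  perturbation_reconstructs_np_general s ε N P hN hP hodeN hodeP φ1 φ2 ψ hφ1 hφ2 hψ heq_φ1 heq_φ2
    heq_ψ

end KSWave
end
end
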